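/- Let n ≥ 1 be an integer, and let s ∈ (0,1) and p ≥ 1 satisfy n < s p. Let Σ ⊆ ℝ^{n+1} be a set, x̄ ∈ Σ, and R > 0, and assume that c⋆ ρⁿ ≤ ℋⁿ(Σ ∩ B_ρ(x₀)) ≤ C⋆ ρⁿ for every x₀ ∈ Σ ∩ B_{2R}(x̄) and every ρ ∈ (0, R], for some constants 0 < c⋆ ≤ C⋆. Then there exists a constant C depending only on n, s, p, c⋆, and C⋆, such that the ℋⁿ-essential supremum of |v| over Σ ∩ B_r(x̄) is at most C R^{(sp−n)/p} ( [v]_{W^{s,p}(Σ∩B_R(x̄))} + (R − r)^{−s} ‖v‖_{L^p(Σ∩B_R(x̄), ℋⁿ)} ) for every r ∈ (0, R) and every v ∈ L^p(Σ∩B_R(x̄), ℋⁿ) with [v]_{W^{s,p}(Σ∩B_R(x̄))} < ∞. -/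

import Mathlib

/-!
Let `μ` be `ℋⁿ` restricted to `Σ ∩ B_R(x̄)`. A point `x` of the closure of `Σ ∩ B_r(x̄)` is
within `ρ/2` of some `x₀ ∈ Σ ∩ B_r(x̄)`, and `Σ ∩ B_{ρ/2}(x₀) ⊆ B_ρ(x)`, so
`μ(B_ρ(x)) ≥ c⋆ (ρ/2)ⁿ` for `ρ ≤ R - r`. By Jensen's inequality the averages of `v` over `B_ρ(x)`
and `B_{ρ/2}(x)` differ by at most `(μ(B_{ρ/2}(x)) μ(B_ρ(x)))^{-1/p}` times the `L^p` norm of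
`v(y) - v(z)` on `B_ρ(x)²`; there `|y - z| ≤ 2ρ`, so the difference is `≲ ρ^{(sp-n)/p} [v]`.
Since `sp > n` these increments are summable along the radii `(R - r)/2ᵏ`, hence at every
Lebesgue point (Besicovitch differentiation) `|v(x) - ⨍_{B_{R-r}(x)} v| ≲ (R - r)^{(sp-n)/p} [v]`,
while Hölder's inequality bounds that average by `(R - r)^{-n/p} ‖v‖_{L^p}`.
-/

open MeasureTheory Metric Set
open scoped ENNReal NNReal

noncomputable section

/-- The fractional Sobolev seminorm
`[v]_{W^{s,p}(U)} = (∫_U ∫_U |v(x)-v(y)|^p |x-y|^{-(n+sp)} dℋⁿ(x) dℋⁿ(y))^{1/p}`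
on an `ℋⁿ`-measurable subset `U` of `ℝ^{n+1}`. -/
def fracSeminorm (n : ℕ) (s p : ℝ) (U : Set (EuclideanSpace ℝ (Fin (n + 1))))
    (v : EuclideanSpace ℝ (Fin (n + 1)) → ℝ) : ℝ≥0∞ :=
  (∫⁻ x in U, ∫⁻ y in U,
      ENNReal.ofReal (|v x - v y| ^ p * ‖x - y‖ ^ (-((n : ℝ) + s * p)))
        ∂μH[(n : ℝ)] ∂μH[(n : ℝ)]) ^ (1 / p)

open Filter Topology

section Jensen

variable {Ω : Type*} [MeasurableSpace Ω] {μ : Measure Ω}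

lemma average_sub {f g : Ω → ℝ} (hf : Integrable f μ) (hg : Integrable g μ) :
    ⨍ x, (f x - g x) ∂μ = ⨍ x, f x ∂μ - ⨍ x, g x ∂μ := by
  simp only [average_eq, integral_sub hf hg, smul_sub]

lemma enorm_average_le_inv_mul_lintegral (f : Ω → ℝ) :
    ‖⨍ x, f x ∂μ‖ₑ ≤ (μ univ)⁻¹ * ∫⁻ x, ‖f x‖ₑ ∂μ := by
  rw [average_eq, enorm_smul]
  gcongr
  · rw [measureReal_def, ← ENNReal.toReal_inv, Real.enorm_of_nonneg ENNReal.toReal_nonneg]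
    exact ENNReal.ofReal_toReal_le
  · exact enorm_integral_le_lintegral_enorm f

lemma enorm_average_rpow_le [IsFiniteMeasure μ] {p : ℝ} (hp : 1 ≤ p) {f : Ω → ℝ}
    (hf : AEStronglyMeasurable f μ) :
    ‖⨍ x, f x ∂μ‖ₑ ^ p ≤ (μ univ)⁻¹ * ∫⁻ x, ‖f x‖ₑ ^ p ∂μ := by
  have hp0 : 0 < p := zero_lt_one.trans_le hp
  rcases eq_zero_or_neZero μ with rfl | hμ
  · simp [ENNReal.zero_rpow_of_pos hp0]
  set m := μ univ
  have hm0 : m ≠ 0 := Measure.measure_univ_ne_zero.2 (NeZero.ne μ)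
  have hmtop : m ≠ ∞ := measure_ne_top μ univ
  have holder :
      ∫⁻ x, ‖f x‖ₑ ∂μ ≤ (∫⁻ x, ‖f x‖ₑ ^ p ∂μ) ^ (1 / p) * m ^ (1 - 1 / p) := by
    simpa [eLpNorm'_eq_lintegral_enorm] using
      eLpNorm'_le_eLpNorm'_mul_rpow_measure_univ one_pos hp hf
  have hm : m⁻¹ * m ^ (1 - 1 / p) = m⁻¹ ^ (1 / p) := by
    rw [ENNReal.rpow_sub _ _ hm0 hmtop, ENNReal.rpow_one, ENNReal.inv_rpow,
      ← mul_div_assoc, ENNReal.inv_mul_cancel hm0 hmtop, one_div]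
  rw [← ENNReal.le_rpow_inv_iff hp0, inv_eq_one_div p]
  calc ‖⨍ x, f x ∂μ‖ₑ
      ≤ m⁻¹ * ∫⁻ x, ‖f x‖ₑ ∂μ := enorm_average_le_inv_mul_lintegral f
    _ ≤ m⁻¹ * ((∫⁻ x, ‖f x‖ₑ ^ p ∂μ) ^ (1 / p) * m ^ (1 - 1 / p)) := by gcongr
    _ = (m⁻¹ * ∫⁻ x, ‖f x‖ₑ ^ p ∂μ) ^ (1 / p) := by
      rw [ENNReal.mul_rpow_of_nonneg _ _ (by positivity), mul_comm _ (m ^ _), ← mul_assoc, hm]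

lemma enorm_setAverage_le_eLpNorm [IsFiniteMeasure μ] {p : ℝ} (hp : 1 ≤ p) {f : Ω → ℝ}
    (hf : AEStronglyMeasurable f μ) (s : Set Ω) :
    ‖⨍ x in s, f x ∂μ‖ₑ ≤ (μ s)⁻¹ ^ (1 / p) * eLpNorm f (ENNReal.ofReal p) μ := by
  have hp0 : 0 < p := zero_lt_one.trans_le hp
  have hjensen := enorm_average_rpow_le hp (hf.restrict (s := s))
  rw [Measure.restrict_apply_univ] at hjensen
  rw [eLpNorm_eq_lintegral_rpow_enorm_toReal (by simpa using hp0) ENNReal.ofReal_ne_top,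
    ENNReal.toReal_ofReal hp0.le, ← ENNReal.mul_rpow_of_nonneg _ _ (by positivity), one_div,
    ENNReal.le_rpow_inv_iff hp0]
  exact hjensen.trans (by gcongr; exact Measure.restrict_le_self)

lemma enorm_setAverage_sub_setAverage_rpow_le [IsFiniteMeasure μ] {p : ℝ} (hp : 1 ≤ p)
    {v : Ω → ℝ} {T B : Set Ω} (hTB : T ⊆ B) (hT : μ T ≠ 0) (hv : IntegrableOn v B μ) :
    ‖⨍ x in T, v x ∂μ - ⨍ x in B, v x ∂μ‖ₑ ^ p ≤
      (μ T)⁻¹ * (μ B)⁻¹ * ∫⁻ y in B, ∫⁻ z in B, ‖v y - v z‖ₑ ^ p ∂μ ∂μ := by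
  have hB : μ B ≠ 0 := ne_bot_of_le_ne_bot hT (measure_mono hTB)
  have : NeZero (μ.restrict T) := ⟨by simpa using hT⟩
  have : NeZero (μ.restrict B) := ⟨by simpa using hB⟩
  set a := ⨍ x in B, v x ∂μ
  have hpoint : ∀ y, ‖v y - a‖ₑ ^ p ≤ (μ B)⁻¹ * ∫⁻ z in B, ‖v y - v z‖ₑ ^ p ∂μ := by
    intro y
    have hmean : v y - a = ⨍ z in B, (v y - v z) ∂μ := by
      rw [average_sub (integrable_const _) hv, average_const]
    simpa [hmean] using enorm_average_rpow_le hp (aestronglyMeasurable_const.sub hv.1)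
  calc ‖⨍ x in T, v x ∂μ - a‖ₑ ^ p = ‖⨍ x in T, (v x - a) ∂μ‖ₑ ^ p := by
        rw [average_sub (hv.mono_set hTB) (integrable_const _), average_const]
    _ ≤ (μ T)⁻¹ * ∫⁻ y in T, ‖v y - a‖ₑ ^ p ∂μ := by
        simpa using
          enorm_average_rpow_le hp ((hv.mono_set hTB).1.sub aestronglyMeasurable_const)
    _ ≤ (μ T)⁻¹ * ∫⁻ y in B, (μ B)⁻¹ * ∫⁻ z in B, ‖v y - v z‖ₑ ^ p ∂μ ∂μ := by
        gcongr (μ T)⁻¹ * ?_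
        exact (lintegral_mono_set hTB).trans (lintegral_mono hpoint)
    _ = _ := by rw [lintegral_const_mul' _ _ (ENNReal.inv_ne_top.2 hB), mul_assoc]

lemma abs_setAverage_le [IsFiniteMeasure μ] {p : ℝ} (hp : 1 ≤ p) {v : Ω → ℝ}
    (hv : MemLp v (ENNReal.ofReal p) μ) {s : Set Ω} {a : ℝ} (ha : 0 < a)
    (hs : ENNReal.ofReal a ≤ μ s) :
    |⨍ y in s, v y ∂μ| ≤ a⁻¹ ^ (1 / p) * (eLpNorm v (ENNReal.ofReal p) μ).toReal := by
  rw [← ENNReal.ofReal_le_ofReal_iff (by positivity), ← Real.enorm_eq_ofReal_abs,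
    ENNReal.ofReal_mul (by positivity), ENNReal.ofReal_toReal hv.2.ne,
    ← ENNReal.ofReal_rpow_of_nonneg (by positivity) (by positivity), ENNReal.ofReal_inv_of_pos ha]
  exact (enorm_setAverage_le_eLpNorm hp hv.1 s).trans (by gcongr)

end Jensen

lemma dist_le_of_dist_half_le_rpow {E : Type*} [PseudoMetricSpace E] {f : ℝ → E} {L : E}
    {M γ δ : ℝ} (hγ : 0 < γ) (hδ : 0 < δ)
    (hf : ∀ ρ ∈ Ioc 0 δ, dist (f (ρ / 2)) (f ρ) ≤ M * ρ ^ γ)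
    (hL : Tendsto f (𝓝[>] 0) (𝓝 L)) :
    dist (f δ) L ≤ M * δ ^ γ / (1 - (2 ^ γ)⁻¹) := by
  have hρ : ∀ k : ℕ, δ / 2 ^ k ∈ Ioc 0 δ := fun k =>
    ⟨by positivity, div_le_self hδ.le (one_le_pow₀ one_le_two)⟩
  have hρpow : ∀ k : ℕ, (δ / 2 ^ k) ^ γ = δ ^ γ * ((2 ^ γ)⁻¹) ^ k := fun k => by
    rw [Real.div_rpow hδ.le (by positivity), ← Real.rpow_pow_comm zero_le_two, div_eq_mul_inv,
      inv_pow]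
  have hρlim : Tendsto (fun k : ℕ => δ / 2 ^ k) atTop (𝓝[>] 0) :=
    tendsto_nhdsWithin_iff.2 ⟨tendsto_const_nhds.div_atTop
      (tendsto_pow_atTop_atTop_of_one_lt one_lt_two), Eventually.of_forall fun k => (hρ k).1⟩
  simpa using dist_le_of_le_geometric_of_tendsto₀ _ (M * δ ^ γ)
    (f := fun k : ℕ => f (δ / 2 ^ k)) (inv_lt_one_of_one_lt₀ (Real.one_lt_rpow one_lt_two hγ))
    (fun k => by
      rw [pow_succ, ← div_div, dist_comm, mul_assoc, ← hρpow]
      exact hf _ (hρ k))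
    (hL.comp hρlim)

lemma one_sub_inv_two_rpow_pos {γ : ℝ} (hγ : 0 < γ) : 0 < 1 - ((2 : ℝ) ^ γ)⁻¹ :=
  sub_pos.2 (inv_lt_one_of_one_lt₀ (Real.one_lt_rpow one_lt_two hγ))

def gagliardoEnergy {X : Type*} [MetricSpace X] [MeasurableSpace X] (μ : Measure X)
    (p θ : ℝ) (v : X → ℝ) : ℝ≥0∞ :=
  ∫⁻ x, ∫⁻ y, ENNReal.ofReal (|v x - v y| ^ p * dist x y ^ (-θ)) ∂μ ∂μ

lemma fracSeminorm_eq_gagliardoEnergy (n : ℕ) (s p : ℝ)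
    (U : Set (EuclideanSpace ℝ (Fin (n + 1)))) (v : EuclideanSpace ℝ (Fin (n + 1)) → ℝ) :
    fracSeminorm n s p U v =
      gagliardoEnergy (μH[(n : ℝ)].restrict U) p (n + s * p) v ^ (1 / p) := by
  simp only [fracSeminorm, gagliardoEnergy, dist_eq_norm]

section MetricMeasureSpace

variable {X : Type*} [MetricSpace X] [MeasurableSpace X] [OpensMeasurableSpace X]

lemma lintegral_closedBall_le_gagliardoEnergy {μ : Measure X} {p θ : ℝ} (hp : 0 < p)
    (hθ : 0 ≤ θ) (v : X → ℝ) (x : X) (ρ : ℝ) :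
    ∫⁻ y in closedBall x ρ, ∫⁻ z in closedBall x ρ, ‖v y - v z‖ₑ ^ p ∂μ ∂μ ≤
      ENNReal.ofReal ((2 * ρ) ^ θ) * gagliardoEnergy μ p θ v := by
  have hkernel : ∀ y ∈ closedBall x ρ, ∀ z ∈ closedBall x ρ, ‖v y - v z‖ₑ ^ p ≤
      ENNReal.ofReal ((2 * ρ) ^ θ) * ENNReal.ofReal (|v y - v z| ^ p * dist y z ^ (-θ)) := by
    intro y hy z hz
    rcases eq_or_ne y z with rfl | hyz
    · simp [ENNReal.zero_rpow_of_pos hp]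
    have hρ : 0 ≤ ρ := dist_nonneg.trans (mem_closedBall.1 hy)
    have hdist : 0 < dist y z := dist_pos.2 hyz
    have hdiam : 1 ≤ (2 * ρ) ^ θ * dist y z ^ (-θ) := by
      rw [Real.rpow_neg hdist.le, ← div_eq_mul_inv, one_le_div (by positivity)]
      exact Real.rpow_le_rpow hdist.le
        (by linarith [dist_triangle_right y z x, mem_closedBall.1 hy, mem_closedBall.1 hz]) hθ
    rw [Real.enorm_eq_ofReal_abs, ENNReal.ofReal_rpow_of_nonneg (abs_nonneg _) hp.le,
      ← ENNReal.ofReal_mul (by positivity)]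
    exact ENNReal.ofReal_le_ofReal
      ((le_mul_of_one_le_right (by positivity) hdiam).trans_eq (by ring))
  calc ∫⁻ y in closedBall x ρ, ∫⁻ z in closedBall x ρ, ‖v y - v z‖ₑ ^ p ∂μ ∂μ
      ≤ ∫⁻ y in closedBall x ρ, ENNReal.ofReal ((2 * ρ) ^ θ) *
          ∫⁻ z in closedBall x ρ, ENNReal.ofReal (|v y - v z| ^ p * dist y z ^ (-θ)) ∂μ ∂μ := by
        refine setLIntegral_mono' measurableSet_closedBall fun y hy => ?_
        rw [← lintegral_const_mul' _ _ ENNReal.ofReal_ne_top]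
        exact setLIntegral_mono' measurableSet_closedBall (hkernel y hy)
    _ ≤ ENNReal.ofReal ((2 * ρ) ^ θ) * gagliardoEnergy μ p θ v := by
        rw [lintegral_const_mul' _ _ ENNReal.ofReal_ne_top]
        gcongr
        exact lintegral_mono' Measure.restrict_le_self fun y =>
          lintegral_mono' Measure.restrict_le_self le_rfl

variable {μ : Measure X} [IsFiniteMeasure μ] {p θ α c δ : ℝ} {x : X} {v : X → ℝ}

lemma enorm_setAverage_closedBall_half_sub_rpow_le (hp : 1 ≤ p) (hθ : 0 ≤ θ) (hc : 0 < c)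
    {ρ : ℝ} (hρ : 0 < ρ)
    (hT : ENNReal.ofReal (c * (ρ / 2) ^ α) ≤ μ (closedBall x (ρ / 2)))
    (hB : ENNReal.ofReal (c * ρ ^ α) ≤ μ (closedBall x ρ))
    (hv : Integrable v μ) (hE : gagliardoEnergy μ p θ v ≠ ∞) :
    ‖⨍ y in closedBall x (ρ / 2), v y ∂μ - ⨍ y in closedBall x ρ, v y ∂μ‖ₑ ^ p ≤
      ENNReal.ofReal (2 ^ (α + θ) / c ^ 2 * (gagliardoEnergy μ p θ v).toReal *
        ρ ^ (θ - 2 * α)) := by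
  set e := (gagliardoEnergy μ p θ v).toReal
  have hscale : (c * (ρ / 2) ^ α)⁻¹ * (c * ρ ^ α)⁻¹ * ((2 * ρ) ^ θ * e) =
      2 ^ (α + θ) / c ^ 2 * e * ρ ^ (θ - 2 * α) := by
    rw [Real.div_rpow hρ.le zero_le_two, Real.mul_rpow zero_le_two hρ.le, Real.rpow_add two_pos,
      show θ - 2 * α = θ - α - α by ring, Real.rpow_sub hρ, Real.rpow_sub hρ]
    have : 0 < ρ ^ α := Real.rpow_pos_of_pos hρ α
    have : 0 < (2 : ℝ) ^ α := Real.rpow_pos_of_pos two_pos α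
    field_simp
  calc _ ≤ (μ (closedBall x (ρ / 2)))⁻¹ * (μ (closedBall x ρ))⁻¹ *
        ∫⁻ y in closedBall x ρ, ∫⁻ z in closedBall x ρ, ‖v y - v z‖ₑ ^ p ∂μ ∂μ :=
        enorm_setAverage_sub_setAverage_rpow_le hp (closedBall_subset_closedBall (by linarith))
          ((ENNReal.ofReal_pos.2 (by positivity)).trans_le hT).ne' hv.integrableOn
    _ ≤ (ENNReal.ofReal (c * (ρ / 2) ^ α))⁻¹ * (ENNReal.ofReal (c * ρ ^ α))⁻¹ *
        (ENNReal.ofReal ((2 * ρ) ^ θ) * ENNReal.ofReal e) := by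
      rw [ENNReal.ofReal_toReal hE]
      gcongr
      exact lintegral_closedBall_le_gagliardoEnergy (zero_lt_one.trans_le hp) hθ v x ρ
    _ = _ := by
      rw [← ENNReal.ofReal_inv_of_pos (by positivity),
        ← ENNReal.ofReal_inv_of_pos (by positivity), ← ENNReal.ofReal_mul (by positivity),
        ← ENNReal.ofReal_mul (by positivity), ← ENNReal.ofReal_mul (by positivity), hscale]

lemma dist_setAverage_closedBall_half_le (hp : 1 ≤ p) (hθ : 0 ≤ θ) (hc : 0 < c)
    (hmass : ∀ ρ ∈ Ioc 0 δ, ENNReal.ofReal (c * ρ ^ α) ≤ μ (closedBall x ρ))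
    (hv : Integrable v μ) (hE : gagliardoEnergy μ p θ v ≠ ∞) {ρ : ℝ} (hρ : ρ ∈ Ioc 0 δ) :
    dist (⨍ y in closedBall x (ρ / 2), v y ∂μ) (⨍ y in closedBall x ρ, v y ∂μ) ≤
      (2 ^ (α + θ) / c ^ 2 * (gagliardoEnergy μ p θ v).toReal) ^ (1 / p) *
        ρ ^ ((θ - 2 * α) / p) := by
  have hp0 : 0 < p := zero_lt_one.trans_le hp
  obtain ⟨hρ0, hρδ⟩ := hρ
  have hpow := enorm_setAverage_closedBall_half_sub_rpow_le hp hθ hc hρ0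
    (hmass (ρ / 2) ⟨by positivity, by linarith⟩) (hmass ρ ⟨hρ0, hρδ⟩) hv hE
  rw [Real.dist_eq, ← ENNReal.ofReal_le_ofReal_iff (by positivity), ← Real.enorm_eq_ofReal_abs,
    ← ENNReal.rpow_le_rpow_iff hp0, ENNReal.ofReal_rpow_of_nonneg (by positivity) hp0.le]
  convert hpow using 2
  rw [Real.mul_rpow (by positivity) (by positivity), ← Real.rpow_mul (by positivity),
    ← Real.rpow_mul hρ0.le, one_div_mul_cancel hp0.ne', Real.rpow_one, div_mul_cancel₀ _ hp0.ne']

lemma dist_setAverage_closedBall_le (hp : 1 ≤ p) (hθ : 0 ≤ θ) (hαθ : 2 * α < θ) (hc : 0 < c)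
    (hδ : 0 < δ) (hmass : ∀ ρ ∈ Ioc 0 δ, ENNReal.ofReal (c * ρ ^ α) ≤ μ (closedBall x ρ))
    (hv : Integrable v μ) (hE : gagliardoEnergy μ p θ v ≠ ∞)
    (hx : Tendsto (fun ρ => ⨍ y in closedBall x ρ, v y ∂μ) (𝓝[>] 0) (𝓝 (v x))) :
    dist (⨍ y in closedBall x δ, v y ∂μ) (v x) ≤
      (2 ^ (α + θ) / c ^ 2) ^ (1 / p) / (1 - (2 ^ ((θ - 2 * α) / p))⁻¹) *
        δ ^ ((θ - 2 * α) / p) * (gagliardoEnergy μ p θ v).toReal ^ (1 / p) := by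
  have hγ : 0 < (θ - 2 * α) / p := div_pos (sub_pos.2 hαθ) (zero_lt_one.trans_le hp)
  refine (dist_le_of_dist_half_le_rpow hγ hδ
    (fun ρ hρ => dist_setAverage_closedBall_half_le hp hθ hc hmass hv hE hρ) hx).trans_eq ?_
  rw [Real.mul_rpow (by positivity) (by positivity)]
  ring

-- The first summand bounds the dyadic telescoping sum, the second the average over `B_δ(x)`.
def morreyConst (c α θ p : ℝ) : ℝ :=
  (2 ^ (α + θ) / c ^ 2) ^ (1 / p) / (1 - (2 ^ ((θ - 2 * α) / p))⁻¹) + c⁻¹ ^ (1 / p)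

lemma morreyConst_pos (hc : 0 < c) (hαθ : 2 * α < θ) (hp : 0 < p) :
    0 < morreyConst c α θ p := by
  have := one_sub_inv_two_rpow_pos (div_pos (sub_pos.2 hαθ) hp)
  unfold morreyConst
  positivity

lemma abs_le_morreyConst_mul (hp : 1 ≤ p) (hθ : 0 ≤ θ) (hαθ : 2 * α < θ) (hc : 0 < c)
    (hδ : 0 < δ) (hmass : ∀ ρ ∈ Ioc 0 δ, ENNReal.ofReal (c * ρ ^ α) ≤ μ (closedBall x ρ))
    (hv : MemLp v (ENNReal.ofReal p) μ) (hE : gagliardoEnergy μ p θ v ≠ ∞)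
    (hx : Tendsto (fun ρ => ⨍ y in closedBall x ρ, v y ∂μ) (𝓝[>] 0) (𝓝 (v x))) :
    |v x| ≤ morreyConst c α θ p * δ ^ ((θ - 2 * α) / p) *
      ((gagliardoEnergy μ p θ v).toReal ^ (1 / p) +
        δ ^ (-((θ - α) / p)) * (eLpNorm v (ENNReal.ofReal p) μ).toReal) := by
  have hp0 : 0 < p := zero_lt_one.trans_le hp
  have := one_sub_inv_two_rpow_pos (div_pos (sub_pos.2 hαθ) hp0)
  set a := ⨍ y in closedBall x δ, v y ∂μ
  have hosc := dist_setAverage_closedBall_le hp hθ hαθ hc hδ hmass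
    (hv.integrable (ENNReal.one_le_ofReal.2 hp)) hE hx
  have hmean := abs_setAverage_le hp hv (by positivity) (hmass δ ⟨hδ, le_rfl⟩)
  have hscale : (c * δ ^ α)⁻¹ ^ (1 / p) =
      c⁻¹ ^ (1 / p) * δ ^ ((θ - 2 * α) / p) * δ ^ (-((θ - α) / p)) := by
    rw [mul_inv, Real.mul_rpow (by positivity) (by positivity),
      Real.inv_rpow (Real.rpow_nonneg hδ.le α), ← Real.rpow_mul hδ.le, ← Real.rpow_neg hδ.le,
      mul_assoc, ← Real.rpow_add hδ]
    ring_nf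
  rw [hscale] at hmean
  have hk₁ : (2 ^ (α + θ) / c ^ 2) ^ (1 / p) / (1 - (2 ^ ((θ - 2 * α) / p))⁻¹) ≤
      morreyConst c α θ p := le_add_of_nonneg_right (by positivity)
  have hk₂ : c⁻¹ ^ (1 / p) ≤ morreyConst c α θ p := le_add_of_nonneg_left (by positivity)
  calc |v x| ≤ dist a (v x) + |a| := by
        rw [Real.dist_eq]; linarith [abs_sub_abs_le_abs_sub (v x) a, abs_sub_comm a (v x)]
    _ ≤ _ := add_le_add hosc hmean
    _ ≤ _ := by
        rw [mul_add, ← mul_assoc (morreyConst c α θ p * _)]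
        gcongr ?_ * _ * _ + ?_ * _ * _ * _

end MetricMeasureSpace

lemma ofReal_le_restrict_closedBall_of_mem_closure {X : Type*} [MetricSpace X]
    [MeasurableSpace X] [OpensMeasurableSpace X] {m : Measure X} {S : Set X} {xbar x : X}
    {R r c α ρ : ℝ}
    (hdens : ∀ x₀ ∈ S ∩ ball xbar (2 * R), ∀ ρ ∈ Ioc 0 R,
      ENNReal.ofReal (c * ρ ^ α) ≤ m (S ∩ ball x₀ ρ))
    (hx : x ∈ closure (S ∩ ball xbar r)) (hρ : ρ ∈ Ioc 0 (R - r)) :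
    ENNReal.ofReal (c / 2 ^ α * ρ ^ α) ≤ m.restrict (S ∩ ball xbar R) (closedBall x ρ) := by
  obtain ⟨hρ0, hρR⟩ := hρ
  obtain ⟨x₀, ⟨hx₀S, hx₀r⟩, hxx₀⟩ := Metric.mem_closure_iff.1 hx (ρ / 2) (half_pos hρ0)
  rw [mem_ball] at hx₀r
  have hr : 0 < r := dist_nonneg.trans_lt hx₀r
  calc ENNReal.ofReal (c / 2 ^ α * ρ ^ α) = ENNReal.ofReal (c * (ρ / 2) ^ α) := by
        rw [Real.div_rpow hρ0.le zero_le_two]; ring_nf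
    _ ≤ m (S ∩ ball x₀ (ρ / 2)) :=
        hdens x₀ ⟨hx₀S, mem_ball.2 (by linarith)⟩ (ρ / 2) ⟨half_pos hρ0, by linarith⟩
    _ ≤ m (closedBall x ρ ∩ (S ∩ ball xbar R)) := measure_mono fun y ⟨hyS, hyx₀⟩ =>
        ⟨mem_closedBall.2 (by linarith [dist_triangle y x₀ x, mem_ball.1 hyx₀, dist_comm x x₀]),
          hyS, mem_ball.2 (by linarith [dist_triangle y x₀ xbar, mem_ball.1 hyx₀])⟩
    _ = _ := (Measure.restrict_apply measurableSet_closedBall).symm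

lemma ae_tendsto_setAverage_closedBall {E : Type*} [MetricSpace E] [MeasurableSpace E]
    [BorelSpace E] [SecondCountableTopology E] [HasBesicovitchCovering E] {μ : Measure E}
    [IsLocallyFiniteMeasure μ] {v : E → ℝ} (hv : LocallyIntegrable v μ) :
    ∀ᵐ x ∂μ, Tendsto (fun ρ => ⨍ y in closedBall x ρ, v y ∂μ) (𝓝[>] 0) (𝓝 (v x)) := by
  filter_upwards [(Besicovitch.vitaliFamily μ).ae_tendsto_average hv] with x hx
  exact hx.comp (Besicovitch.tendsto_filterAt μ x)

lemma ae_enorm_le_morreyConst_mul {E : Type*} [MetricSpace E] [MeasurableSpace E]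
    [BorelSpace E] [SecondCountableTopology E] [HasBesicovitchCovering E] {m : Measure E}
    {S : Set E} {xbar : E} {R r c α θ p : ℝ} (hp : 1 ≤ p) (hθ : 0 ≤ θ) (hαθ : 2 * α < θ)
    (hc : 0 < c) (hr : r < R)
    (hdens : ∀ x₀ ∈ S ∩ ball xbar (2 * R), ∀ ρ ∈ Ioc 0 R,
      ENNReal.ofReal (c * ρ ^ α) ≤ m (S ∩ ball x₀ ρ))
    [IsFiniteMeasure (m.restrict (S ∩ ball xbar R))] {v : E → ℝ}
    (hv : MemLp v (ENNReal.ofReal p) (m.restrict (S ∩ ball xbar R)))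
    (hE : gagliardoEnergy (m.restrict (S ∩ ball xbar R)) p θ v ≠ ∞) :
    ∀ᵐ x ∂m.restrict (S ∩ ball xbar r), ‖v x‖ₑ ≤
      ENNReal.ofReal (morreyConst (c / 2 ^ α) α θ p * (R - r) ^ ((θ - 2 * α) / p)) *
        (gagliardoEnergy (m.restrict (S ∩ ball xbar R)) p θ v ^ (1 / p) +
          ENNReal.ofReal ((R - r) ^ (-((θ - α) / p))) *
            eLpNorm v (ENNReal.ofReal p) (m.restrict (S ∩ ball xbar R))) := by
  have hle : m.restrict (S ∩ ball xbar r) ≤ m.restrict (S ∩ ball xbar R) :=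
    Measure.restrict_mono (inter_subset_inter_right _ (ball_subset_ball hr.le)) le_rfl
  filter_upwards [ae_mono hle (ae_tendsto_setAverage_closedBall
      (hv.integrable (ENNReal.one_le_ofReal.2 hp)).locallyIntegrable),
    (ae_restrict_mem isClosed_closure.measurableSet).filter_mono
      (ae_mono (Measure.restrict_mono subset_closure le_rfl))] with x hx hxcl
  have hK := (morreyConst_pos (c := c / 2 ^ α) (by positivity) hαθ (zero_lt_one.trans_le hp)).le
  have hd : 0 < R - r := sub_pos.2 hr
  rw [Real.enorm_eq_ofReal_abs]
  refine (ENNReal.ofReal_le_ofReal (abs_le_morreyConst_mul hp hθ hαθ (by positivity)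
    hd (fun ρ hρ => ofReal_le_restrict_closedBall_of_mem_closure hdens hxcl hρ)
    hv hE hx)).trans_eq ?_
  rw [ENNReal.ofReal_mul (mul_nonneg hK (Real.rpow_nonneg hd.le _)),
    ENNReal.ofReal_add (by positivity) (by positivity),
    ENNReal.ofReal_mul (Real.rpow_nonneg hd.le _), ENNReal.toReal_rpow, ENNReal.ofReal_toReal,
    ENNReal.ofReal_toReal hv.2.ne]
  exact ENNReal.rpow_ne_top_of_nonneg (by positivity) hE

theorem fractional_morrey_general (n : ℕ) (s p : ℝ) (hp : 1 ≤ p) (hnsp : (n : ℝ) < s * p)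
    (cstar Cstar : ℝ) (hcstar : 0 < cstar) :
    ∃ C : ℝ, 0 < C ∧
      ∀ (S : Set (EuclideanSpace ℝ (Fin (n + 1))))
        (xbar : EuclideanSpace ℝ (Fin (n + 1))) (R : ℝ),
        xbar ∈ S → 0 < R →
        (∀ x₀ ∈ S ∩ ball xbar (2 * R), ∀ ρ ∈ Ioc (0 : ℝ) R,
          ENNReal.ofReal (cstar * ρ ^ n) ≤ μH[(n : ℝ)] (S ∩ ball x₀ ρ) ∧
            μH[(n : ℝ)] (S ∩ ball x₀ ρ) ≤ ENNReal.ofReal (Cstar * ρ ^ n)) →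
        ∀ r ∈ Ioo (0 : ℝ) R,
          ∀ v : EuclideanSpace ℝ (Fin (n + 1)) → ℝ,
            MemLp v (ENNReal.ofReal p) (μH[(n : ℝ)].restrict (S ∩ ball xbar R)) →
            fracSeminorm n s p (S ∩ ball xbar R) v ≠ ⊤ →
            eLpNorm v ⊤ (μH[(n : ℝ)].restrict (S ∩ ball xbar r))
              ≤ ENNReal.ofReal (C * R ^ ((s * p - n) / p)) *
                  (fracSeminorm n s p (S ∩ ball xbar R) v +
                    ENNReal.ofReal ((R - r) ^ (-s)) *
                      eLpNorm v (ENNReal.ofReal p)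
                        (μH[(n : ℝ)].restrict (S ∩ ball xbar R))) := by
  have hp0 : 0 < p := zero_lt_one.trans_le hp
  have hn : (0 : ℝ) ≤ n := n.cast_nonneg
  have hαθ : 2 * (n : ℝ) < n + s * p := by linarith
  have hK := morreyConst_pos (c := cstar / 2 ^ (n : ℝ)) (by positivity) hαθ hp0
  refine ⟨_, hK, ?_⟩
  intro S xbar R hxbar hR hdens r ⟨hr0, hrR⟩ v hv hfrac
  have hdens' : ∀ x₀ ∈ S ∩ ball xbar (2 * R), ∀ ρ ∈ Ioc (0 : ℝ) R,
      ENNReal.ofReal (cstar * ρ ^ (n : ℝ)) ≤ μH[(n : ℝ)] (S ∩ ball x₀ ρ) := fun x₀ hx₀ ρ hρ => by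
    simpa only [Real.rpow_natCast] using (hdens x₀ hx₀ ρ hρ).1
  have : IsFiniteMeasure (μH[(n : ℝ)].restrict (S ∩ ball xbar R)) :=
    isFiniteMeasure_restrict.2 (ne_top_of_le_ne_top ENNReal.ofReal_ne_top
      (hdens xbar ⟨hxbar, mem_ball_self (by linarith)⟩ R ⟨hR, le_rfl⟩).2)
  rw [fracSeminorm_eq_gagliardoEnergy] at hfrac ⊢
  have hE := (ENNReal.rpow_eq_top_iff_of_pos (by positivity)).not.1 hfrac
  rw [eLpNorm_exponent_top]
  refine eLpNormEssSup_le_of_ae_enorm_bound ((ae_enorm_le_morreyConst_mul hp (by linarith) hαθ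
    (by positivity) hrR hdens' hv hE).mono fun x hx => hx.trans ?_)
  rw [show ((n : ℝ) + s * p - 2 * n) / p = (s * p - n) / p by ring,
    show ((n : ℝ) + s * p - n) / p = s by field_simp; ring]
  gcongr
  linarith

/-- Morrey-type `L^∞` estimate for `W^{s,p}` functions when `n < sp`
(Proposition 5.5). -/
theorem fractional_morrey (n : ℕ) (hn : 1 ≤ n) (s p : ℝ)
    (hs : s ∈ Ioo (0 : ℝ) 1) (hp : 1 ≤ p) (hnsp : (n : ℝ) < s * p)
    (cstar Cstar : ℝ) (hcstar : 0 < cstar) (hcC : cstar ≤ Cstar) :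
    ∃ C : ℝ, 0 < C ∧
      ∀ (S : Set (EuclideanSpace ℝ (Fin (n + 1))))
        (xbar : EuclideanSpace ℝ (Fin (n + 1))) (R : ℝ),
        xbar ∈ S → 0 < R →
        (∀ x₀ ∈ S ∩ ball xbar (2 * R), ∀ ρ ∈ Ioc (0 : ℝ) R,
          ENNReal.ofReal (cstar * ρ ^ n) ≤ μH[(n : ℝ)] (S ∩ ball x₀ ρ) ∧
            μH[(n : ℝ)] (S ∩ ball x₀ ρ) ≤ ENNReal.ofReal (Cstar * ρ ^ n)) →
        ∀ r ∈ Ioo (0 : ℝ) R,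
          ∀ v : EuclideanSpace ℝ (Fin (n + 1)) → ℝ,
            MemLp v (ENNReal.ofReal p) (μH[(n : ℝ)].restrict (S ∩ ball xbar R)) →
            fracSeminorm n s p (S ∩ ball xbar R) v ≠ ⊤ →
            eLpNorm v ⊤ (μH[(n : ℝ)].restrict (S ∩ ball xbar r))
              ≤ ENNReal.ofReal (C * R ^ ((s * p - n) / p)) *
                  (fracSeminorm n s p (S ∩ ball xbar R) v +
                    ENNReal.ofReal ((R - r) ^ (-s)) *
                      eLpNorm v (ENNReal.ofReal p)
                        (μH[(n : ℝ)].restrict (S ∩ ball xbar R))) :=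
  fractional_morrey_general n s p hp hnsp cstar Cstar hcstar
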